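/- For every continuous T-periodic function h : ℝ → ℝ there exists a unique real number α = c(h) such that ∫₀ᵀ φ⁻¹(h(t) + α) dt = 0, where φ⁻¹(y) = y/√(1 + y²/c²) is the inverse of the relativistic operator; moreover, the map h ↦ c(h) is continuous with respect to the supremum norm on continuous T-periodic functions. -/

import Mathlib

/-! For continuous `h` and a continuous strictly increasing `g` with `g 0 = 0`, the map
`α ↦ ∫₀ᵀ g (h t + α) dt` is continuous and strictly increasing, nonpositive at `α = -M` and
nonnegative at `α = M` when `|h| ≤ M` on `[0, T]`; so it has exactly one zero `C h`. Monotonicity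
alone gives continuity of `h ↦ C h`: if `h₁ ≤ h₂ + δ`, then `∫₀ᵀ g (h₂ t + C h₁ + δ) dt` is at
least `∫₀ᵀ g (h₁ t + C h₁) dt = 0`, whence `C h₂ ≤ C h₁ + δ`. -/

open Real Set MeasureTheory

/-- The inverse of the relativistic operator: `φ⁻¹(y) = y / √(1 + y²/c²)`. -/
noncomputable def phiInv (c y : ℝ) : ℝ := y / Real.sqrt (1 + y ^ 2 / c ^ 2)

section PhiInv

variable {c : ℝ}

lemma phiInv_zero : phiInv c 0 = 0 := by simp [phiInv]

lemma continuous_phiInv : Continuous (phiInv c) := by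
  unfold phiInv
  exact continuous_id.div (by fun_prop) fun y => (by positivity : 0 < √(1 + y ^ 2 / c ^ 2)).ne'

lemma hasDerivAt_phiInv (y : ℝ) : HasDerivAt (phiInv c) (1 / √(1 + y ^ 2 / c ^ 2) ^ 3) y := by
  have hu : 0 < 1 + y ^ 2 / c ^ 2 := by positivity
  have hS : 0 < √(1 + y ^ 2 / c ^ 2) := by positivity
  have hinner : HasDerivAt (fun y : ℝ => 1 + y ^ 2 / c ^ 2) (2 * y / c ^ 2) y := by
    simpa using ((hasDerivAt_pow 2 y).div_const (c ^ 2)).const_add 1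
  refine ((hasDerivAt_id' y).div ((Real.hasDerivAt_sqrt hu.ne').comp y hinner) hS.ne').congr_deriv ?_
  have hSq : √(1 + y ^ 2 / c ^ 2) ^ 2 = 1 + y ^ 2 / c ^ 2 := Real.sq_sqrt hu.le
  simp only [Function.comp_apply]
  field_simp
  linear_combination hSq

lemma phiInv_strictMono : StrictMono (phiInv c) :=
  strictMono_of_hasDerivAt_pos hasDerivAt_phiInv fun y => by positivity

end PhiInv

section ShiftIntegral

variable {g h h₁ h₂ : ℝ → ℝ} {T : ℝ}

noncomputable def shiftIntegral (g : ℝ → ℝ) (T : ℝ) (h : ℝ → ℝ) (α : ℝ) : ℝ :=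
  ∫ t in (0 : ℝ)..T, g (h t + α)

lemma intervalIntegrable_comp_add (hg : Continuous g) (hh : Continuous h) (α : ℝ) :
    IntervalIntegrable (fun t => g (h t + α)) volume 0 T :=
  (hg.comp (hh.add continuous_const)).intervalIntegrable 0 T

lemma continuous_shiftIntegral (hg : Continuous g) (hh : Continuous h) :
    Continuous (shiftIntegral g T h) := by
  unfold shiftIntegral
  fun_prop

lemma shiftIntegral_le_shiftIntegral (hg : Monotone g) (hgc : Continuous g) (hh₁ : Continuous h₁)
    (hh₂ : Continuous h₂) (hT : 0 ≤ T) {α β : ℝ} (hle : ∀ t ∈ Icc 0 T, h₁ t + α ≤ h₂ t + β) :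
    shiftIntegral g T h₁ α ≤ shiftIntegral g T h₂ β :=
  intervalIntegral.integral_mono_on hT (intervalIntegrable_comp_add hgc hh₁ α)
    (intervalIntegrable_comp_add hgc hh₂ β) fun t ht => hg (hle t ht)

lemma shiftIntegral_strictMono (hg : StrictMono g) (hgc : Continuous g) (hh : Continuous h)
    (hT : 0 < T) : StrictMono (shiftIntegral g T h) := fun α β hαβ =>
  intervalIntegral.integral_lt_integral_of_continuousOn_of_le_of_exists_lt hT
    (hgc.comp (hh.add continuous_const)).continuousOn
    (hgc.comp (hh.add continuous_const)).continuousOn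
    (fun t _ => hg.monotone (by linarith)) ⟨0, left_mem_Icc.2 hT.le, hg (by linarith)⟩

lemma exists_shiftIntegral_eq_zero (hg : Monotone g) (hgc : Continuous g) (hg0 : g 0 = 0)
    (hh : Continuous h) (hT : 0 ≤ T) : ∃ α, shiftIntegral g T h α = 0 := by
  obtain ⟨M, hM⟩ := isCompact_Icc.exists_bound_of_continuousOn (hh.continuousOn (s := Icc 0 T))
  have hbound t (ht : t ∈ Icc 0 T) : -M ≤ h t ∧ h t ≤ M := abs_le.1 (hM t ht)
  have hzero : shiftIntegral g T (fun _ => 0) 0 = 0 := by simp [shiftIntegral, hg0]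
  have hlow : shiftIntegral g T h (-M) ≤ 0 := by
    rw [← hzero]
    exact shiftIntegral_le_shiftIntegral hg hgc hh continuous_const hT fun t ht => by
      linarith [hbound t ht]
  have hhigh : 0 ≤ shiftIntegral g T h M := by
    rw [← hzero]
    exact shiftIntegral_le_shiftIntegral hg hgc continuous_const hh hT fun t ht => by
      linarith [hbound t ht]
  have hM₀ := hbound 0 (left_mem_Icc.2 hT)
  obtain ⟨α, -, hα⟩ := intermediate_value_Icc (by linarith [hM₀.1, hM₀.2])
    (continuous_shiftIntegral hgc hh).continuousOn ⟨hlow, hhigh⟩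
  exact ⟨α, hα⟩

noncomputable def zeroShift (g : ℝ → ℝ) (T : ℝ) (h : ℝ → ℝ) : ℝ :=
  Classical.epsilon fun α => shiftIntegral g T h α = 0

lemma shiftIntegral_zeroShift (hg : Monotone g) (hgc : Continuous g) (hg0 : g 0 = 0)
    (hh : Continuous h) (hT : 0 ≤ T) : shiftIntegral g T h (zeroShift g T h) = 0 :=
  Classical.epsilon_spec (exists_shiftIntegral_eq_zero hg hgc hg0 hh hT)

lemma eq_zeroShift_iff (hg : StrictMono g) (hgc : Continuous g) (hg0 : g 0 = 0)
    (hh : Continuous h) (hT : 0 < T) {α : ℝ} :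
    α = zeroShift g T h ↔ shiftIntegral g T h α = 0 := by
  rw [← shiftIntegral_zeroShift hg.monotone hgc hg0 hh hT.le]
  exact (shiftIntegral_strictMono hg hgc hh hT).injective.eq_iff.symm

lemma zeroShift_le_add (hg : StrictMono g) (hgc : Continuous g) (hg0 : g 0 = 0)
    (hh₁ : Continuous h₁) (hh₂ : Continuous h₂) (hT : 0 < T) {δ : ℝ} (hle : ∀ t, h₁ t ≤ h₂ t + δ) :
    zeroShift g T h₂ ≤ zeroShift g T h₁ + δ := by
  rw [← (shiftIntegral_strictMono hg hgc hh₂ hT).le_iff_le,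
    shiftIntegral_zeroShift hg.monotone hgc hg0 hh₂ hT.le,
    ← shiftIntegral_zeroShift hg.monotone hgc hg0 hh₁ hT.le]
  exact shiftIntegral_le_shiftIntegral hg.monotone hgc hh₁ hh₂ hT.le fun t _ => by
    linarith [hle t]

lemma abs_zeroShift_sub_le (hg : StrictMono g) (hgc : Continuous g) (hg0 : g 0 = 0)
    (hh₁ : Continuous h₁) (hh₂ : Continuous h₂) (hT : 0 < T) {δ : ℝ}
    (hle : ∀ t, |h₂ t - h₁ t| ≤ δ) : |zeroShift g T h₂ - zeroShift g T h₁| ≤ δ := by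
  have h₂_le t : h₂ t ≤ h₁ t + δ := by linarith [(abs_le.1 (hle t)).2]
  have h₁_le t : h₁ t ≤ h₂ t + δ := by linarith [(abs_le.1 (hle t)).1]
  rw [abs_sub_le_iff]
  constructor
  · linarith [zeroShift_le_add hg hgc hg0 hh₁ hh₂ hT h₁_le]
  · linarith [zeroShift_le_add hg hgc hg0 hh₂ hh₁ hT h₂_le]

end ShiftIntegral

theorem exists_unique_constant_and_continuous_general (c T : ℝ) (hT : 0 < T) :
    ∃ C : (ℝ → ℝ) → ℝ,
      (∀ h : ℝ → ℝ, Continuous h → Function.Periodic h T →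
        (∫ t in (0:ℝ)..T, phiInv c (h t + C h)) = 0 ∧
        ∀ α : ℝ, (∫ t in (0:ℝ)..T, phiInv c (h t + α)) = 0 → α = C h) ∧
      (∀ h₁ : ℝ → ℝ, Continuous h₁ → Function.Periodic h₁ T →
        ∀ ε : ℝ, 0 < ε → ∃ δ : ℝ, 0 < δ ∧
          ∀ h₂ : ℝ → ℝ, Continuous h₂ → Function.Periodic h₂ T →
            (∀ t : ℝ, |h₂ t - h₁ t| ≤ δ) → |C h₂ - C h₁| ≤ ε) := by
  refine ⟨zeroShift (phiInv c) T, fun h hh _ => ⟨?_, fun α => ?_⟩, ?_⟩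
  · exact shiftIntegral_zeroShift phiInv_strictMono.monotone continuous_phiInv phiInv_zero hh hT.le
  · exact (eq_zeroShift_iff phiInv_strictMono continuous_phiInv phiInv_zero hh hT).2
  · exact fun h₁ hh₁ _ ε hε => ⟨ε, hε, fun h₂ hh₂ _ =>
      abs_zeroShift_sub_le phiInv_strictMono continuous_phiInv phiInv_zero hh₁ hh₂ hT⟩

/-- for every continuous `T`-periodic `h` there is a unique `α = C(h)` with
`∫₀ᵀ φ⁻¹(h(t) + α) dt = 0`, and `h ↦ C(h)` is continuous for the supremum norm. -/
theorem exists_unique_constant_and_continuous (c T : ℝ) (hc : 0 < c) (hT : 0 < T) :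
    ∃ C : (ℝ → ℝ) → ℝ,
      (∀ h : ℝ → ℝ, Continuous h → Function.Periodic h T →
        (∫ t in (0:ℝ)..T, phiInv c (h t + C h)) = 0 ∧
        ∀ α : ℝ, (∫ t in (0:ℝ)..T, phiInv c (h t + α)) = 0 → α = C h) ∧
      (∀ h₁ : ℝ → ℝ, Continuous h₁ → Function.Periodic h₁ T →
        ∀ ε : ℝ, 0 < ε → ∃ δ : ℝ, 0 < δ ∧
          ∀ h₂ : ℝ → ℝ, Continuous h₂ → Function.Periodic h₂ T →
            (∀ t : ℝ, |h₂ t - h₁ t| ≤ δ) → |C h₂ - C h₁| ≤ ε) :=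
  exists_unique_constant_and_continuous_general c T hT
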